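/- For any two random variables Y and Z with joint distribution P(Y,Z) and any measurable function f(Y,Z), the mutual information satisfies I(Y;Z) ≥ E_{P(Y,Z)}[f(Y,Z)] − e^{−1} · E_{P(Y)P(Z)}[e^{f(Y,Z)}] (the Nguyen–Wainwright–Jordan variational lower bound on mutual information). -/
import Mathlib


open MeasureTheory

/-- Kullback–Leibler divergence of `μ` with respect to `ν`, as a real number
(the expectation under `μ` of the log Radon–Nikodym derivative). -/
noncomputable def klDiv {Ω : Type*} [MeasurableSpace Ω] (μ ν : Measure Ω) : ℝ :=
  ∫ ω, Real.log (μ.rnDeriv ν ω).toReal ∂μ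

lemma nwj_pointwise (g x : ℝ) (hg : 0 ≤ g) :
    g * x - Real.exp (-1) * Real.exp x ≤ g * Real.log g := by
  rcases eq_or_lt_of_le hg with h | h
  · rw [← h]
    simp only [zero_mul, zero_sub]
    have := Real.exp_pos (-1)
    have := Real.exp_pos x
    nlinarith
  · have h1 : x - Real.log g ≤ Real.exp (x - Real.log g - 1) := by
      linarith [Real.add_one_le_exp (x - Real.log g - 1)]
    have h2 : Real.exp (x - Real.log g - 1) = Real.exp (-1) * Real.exp x / g := by
      rw [show x - Real.log g - 1 = x + (-1) - Real.log g by ring, Real.exp_sub,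
        Real.exp_add, Real.exp_log h]
      ring
    rw [h2] at h1
    have h3 : g * (x - Real.log g) ≤ g * (Real.exp (-1) * Real.exp x / g) :=
      mul_le_mul_of_nonneg_left h1 hg
    rw [mul_div_cancel₀ _ h.ne'] at h3
    nlinarith

/-- The Nguyen–Wainwright–Jordan variational lower bound on mutual information:
for random variables `Y, Z` with joint law `joint` and product-of-marginals `prodm`,
and any measurable `f` with the relevant expectations finite,
`I(Y;Z) = KL(joint ‖ prodm) ≥ E_joint[f] - e⁻¹ E_prodm[exp f]`. -/
theorem nwj_lower_bound {Ω β γ : Type*} [MeasurableSpace Ω]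
    [MeasurableSpace β] [StandardBorelSpace β]
    [MeasurableSpace γ] [StandardBorelSpace γ]
    (P : Measure Ω) [IsProbabilityMeasure P]
    (Y : Ω → β) (Z : Ω → γ) (hY : Measurable Y) (hZ : Measurable Z)
    (f : β × γ → ℝ) (hf : Measurable f)
    (joint prodm : Measure (β × γ))
    (hjoint : joint = P.map fun ω => (Y ω, Z ω))
    (hprod : prodm = (P.map Y).prod (P.map Z))
    (hac : joint ≪ prodm)
    (hint1 : Integrable f joint)
    (hint2 : Integrable (fun p => Real.exp (f p)) prodm)
    (hint3 : Integrable (fun p => Real.log (joint.rnDeriv prodm p).toReal) joint) :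
    (∫ p, f p ∂joint) - Real.exp (-1) * (∫ p, Real.exp (f p) ∂prodm)
      ≤ klDiv joint prodm := by
  have hjp : IsProbabilityMeasure joint := by
    rw [hjoint]; exact Measure.isProbabilityMeasure_map ((hY.prodMk hZ)).aemeasurable
  have hYp : IsProbabilityMeasure (P.map Y) := Measure.isProbabilityMeasure_map hY.aemeasurable
  have hZp : IsProbabilityMeasure (P.map Z) := Measure.isProbabilityMeasure_map hZ.aemeasurable
  have hpp : IsProbabilityMeasure prodm := by rw [hprod]; infer_instance
  set g : β × γ → ℝ := fun p => (joint.rnDeriv prodm p).toReal with hg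
  have h1 : ∫ p, f p ∂joint = ∫ p, g p • f p ∂prodm :=
    (integral_rnDeriv_smul hac).symm
  have h3 : klDiv joint prodm = ∫ p, g p • Real.log (g p) ∂prodm := by
    rw [klDiv]
    exact (integral_rnDeriv_smul hac).symm
  have hi1 : Integrable (fun p => g p * f p) prodm :=
    (integrable_rnDeriv_smul_iff hac).mpr hint1
  have hi3 : Integrable (fun p => g p * Real.log (g p)) prodm :=
    (integrable_rnDeriv_smul_iff hac).mpr hint3
  have hi2 : Integrable (fun p => Real.exp (-1) * Real.exp (f p)) prodm :=
    hint2.const_mul _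
  simp only [smul_eq_mul] at h1 h3 hi1 hi3
  have key : ∫ p, (g p * f p - Real.exp (-1) * Real.exp (f p)) ∂prodm
      ≤ ∫ p, g p * Real.log (g p) ∂prodm := by
    apply integral_mono (hi1.sub hi2) hi3
    intro p
    exact nwj_pointwise (g p) (f p) ENNReal.toReal_nonneg
  rw [integral_sub hi1 hi2, integral_const_mul] at key
  rw [h1, h3]
  exact key
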